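/- There exists a constant C > 0 such that for any (α₁,α₂) ∈ R₂ with α₁ ≥ α₂, setting α₃ := 2−α₁−2√α₂+α₂, for every n ∈ ℕ, setting a = ⌊√α₂·n⌋, b = ⌊((1−α₁)/(2√α₂))·n⌋ and c = n−a−b, the n-vertex 3-colouring template H(a,b,c) satisfies |E(H_i)| ≥ α_i·C(n,2) − C·n for each i ∈ {1,2,3} and contains no rainbow triangle. -/

import Mathlib

/-- The number of edges of a simple graph (as a cardinal via `Set.ncard`). -/
noncomputable def edgeCount {V : Type*} (G : SimpleGraph V) : ℕ := G.edgeSet.ncard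

/-- A 3-colouring template `G` contains a rainbow triangle if there are three distinct
vertices and a permutation of the colours assigning the three edges of the triangle
to distinct colour classes. -/
def HasRainbowTriangle {V : Type*} (G : Fin 3 → SimpleGraph V) : Prop :=
  ∃ u v w : V, u ≠ v ∧ v ≠ w ∧ u ≠ w ∧
    ∃ σ : Equiv.Perm (Fin 3),
      (G (σ 0)).Adj u v ∧ (G (σ 1)).Adj v w ∧ (G (σ 2)).Adj u w

/-- Membership in the region `R₂`. -/
noncomputable def MemR2 (α₁ α₂ : ℝ) : Prop :=
  α₁ ∈ Set.Icc (0:ℝ) 1 ∧ α₂ ∈ Set.Icc (0:ℝ) 1 ∧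
  max (2 - 2 * Real.sqrt α₂) (1 - 2 * Real.sqrt α₂ + 2 * α₂) ≤ α₁

/-- The part (0 for `A`, 1 for `B`, 2 for `C`) of a vertex of `Fin n` under the partition
of `[n]` into an initial segment `A` of size `a`, then `B` of size `b`, then `C`. -/
def part (a b : ℕ) {n : ℕ} (v : Fin n) : ℕ :=
  if (v : ℕ) < a then 0 else if (v : ℕ) < a + b then 1 else 2

/-- The colouring template `H(a, b, c)` (with `c = n - a - b`) on vertex set `Fin n`:
`H₁ = A⁽²⁾ ∪ (B ∪ C)⁽²⁾ ∪ (A,C)⁽²⁾`, `H₂ = A⁽²⁾`, `H₃ = (B ∪ C)⁽²⁾ ∪ (A,B)⁽²⁾`. -/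
def Htemplate (n a b : ℕ) : Fin 3 → SimpleGraph (Fin n) :=
  ![SimpleGraph.fromRel (fun u v =>
      (part a b u = 0 ∧ part a b v = 0) ∨ (part a b u ≠ 0 ∧ part a b v ≠ 0) ∨
        (part a b u = 0 ∧ part a b v = 2)),
    SimpleGraph.fromRel (fun u v => part a b u = 0 ∧ part a b v = 0),
    SimpleGraph.fromRel (fun u v =>
      (part a b u ≠ 0 ∧ part a b v ≠ 0) ∨ (part a b u = 0 ∧ part a b v = 1))]

open Finset

lemma fin3_cases (i : Fin 3) : i = 0 ∨ i = 1 ∨ i = 2 := by fin_cases i <;> simp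

lemma noRT (n a b : ℕ) : ¬ HasRainbowTriangle (Htemplate n a b) := by
  rintro ⟨u, v, w, huv, hvw, huw, σ, h0, h1, h2⟩
  have i01 : σ 0 ≠ σ 1 := fun h => absurd (σ.injective h) (by decide)
  have i02 : σ 0 ≠ σ 2 := fun h => absurd (σ.injective h) (by decide)
  have i12 : σ 1 ≠ σ 2 := fun h => absurd (σ.injective h) (by decide)
  rcases fin3_cases (σ 0) with e0|e0|e0 <;> rcases fin3_cases (σ 1) with e1|e1|e1 <;>
    rcases fin3_cases (σ 2) with e2|e2|e2 <;>
    first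
      | exact i01 (e0.trans e1.symm)
      | exact i02 (e0.trans e2.symm)
      | exact i12 (e1.trans e2.symm)
      | (rw [e0] at h0; rw [e1] at h1; rw [e2] at h2;
         simp only [Htemplate, Matrix.cons_val_zero, Matrix.cons_val_one, Matrix.head_cons,
           SimpleGraph.fromRel_adj, Matrix.cons_val_two, Matrix.tail_cons] at h0 h1 h2;
         obtain ⟨-, h0⟩ := h0; obtain ⟨-, h1⟩ := h1; obtain ⟨-, h2⟩ := h2; omega)

lemma part_eq_zero {a b n : ℕ} (v : Fin n) : part a b v = 0 ↔ (v : ℕ) < a := by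
  unfold part; split_ifs <;> simp_all

lemma part_eq_one {a b n : ℕ} (v : Fin n) : part a b v = 1 ↔ (a ≤ (v:ℕ) ∧ (v:ℕ) < a + b) := by
  unfold part; split_ifs <;> simp_all <;> omega

lemma part_eq_two {a b n : ℕ} (v : Fin n) : part a b v = 2 ↔ a + b ≤ (v:ℕ) := by
  unfold part; split_ifs <;> simp_all <;> omega

lemma card_filter_val {n : ℕ} (P : ℕ → Prop) [DecidablePred P] :
    (Finset.univ.filter fun v : Fin n => P (v : ℕ)).card = ((Finset.range n).filter P).card := by
  refine Finset.card_bij (fun v _ => (v : ℕ)) ?_ ?_ ?_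
  · intro v hv; simp only [mem_filter, mem_univ, true_and] at hv
    simp [v.isLt, hv]
  · intro u _ v _ h; exact Fin.ext h
  · intro x hx; simp only [mem_filter, mem_range] at hx
    exact ⟨⟨x, hx.1⟩, by simp [hx.2], rfl⟩

lemma card_p0 {n : ℕ} (a b : ℕ) (h : a ≤ n) :
    (Finset.univ.filter fun v : Fin n => part a b v = 0).card = a := by
  refine Eq.trans (congrArg Finset.card
      (Finset.filter_congr fun v _ => (part_eq_zero v).trans (Iff.rfl)))
    ((card_filter_val (fun x => x < a)).trans ?_)
  rw [show (Finset.range n).filter (fun x => x < a) = Finset.range a from by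
    ext x; simp; omega]
  exact Finset.card_range a

lemma card_p1 {n : ℕ} (a b : ℕ) (h : a + b ≤ n) :
    (Finset.univ.filter fun v : Fin n => part a b v = 1).card = b := by
  refine Eq.trans (congrArg Finset.card
      (Finset.filter_congr fun v _ => (part_eq_one v).trans (Iff.rfl)))
    ((card_filter_val (fun x => a ≤ x ∧ x < a + b)).trans ?_)
  rw [show (Finset.range n).filter (fun x => a ≤ x ∧ x < a + b) = Finset.Ico a (a+b) from by
    ext x; simp; omega]
  rw [Nat.card_Ico]; omega

lemma card_p2 {n : ℕ} (a b : ℕ) (h : a + b ≤ n) :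
    (Finset.univ.filter fun v : Fin n => part a b v = 2).card = n - a - b := by
  refine Eq.trans (congrArg Finset.card
      (Finset.filter_congr fun v _ => (part_eq_two v).trans (Iff.rfl)))
    ((card_filter_val (fun x => a + b ≤ x)).trans ?_)
  rw [show (Finset.range n).filter (fun x => a + b ≤ x) = Finset.Ico (a+b) n from by
    ext x; simp; omega]
  rw [Nat.card_Ico]; omega

lemma sum_part {n : ℕ} (a b : ℕ) (h : a + b ≤ n) (f : ℕ → ℕ) :
    ∑ v : Fin n, f (part a b v) = a * f 0 + b * f 1 + (n - a - b) * f 2 := by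
  classical
  have key : ∀ k : ℕ, ∑ v ∈ Finset.univ.filter (fun v : Fin n => part a b v = k),
      f (part a b v) = (Finset.univ.filter (fun v : Fin n => part a b v = k)).card * f k := by
    intro k
    rw [Finset.sum_congr rfl (fun v hv => by rw [(Finset.mem_filter.1 hv).2])]
    rw [Finset.sum_const, smul_eq_mul]
  have split : (Finset.univ : Finset (Fin n))
      = ((Finset.univ.filter fun v : Fin n => part a b v = 0)
        ∪ (Finset.univ.filter fun v : Fin n => part a b v = 1))
        ∪ (Finset.univ.filter fun v : Fin n => part a b v = 2) := by
    ext v; simp only [Finset.mem_union, Finset.mem_filter, Finset.mem_univ, true_and]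
    unfold part; split_ifs <;> simp
  rw [split, Finset.sum_union, Finset.sum_union, key 0, key 1, key 2,
    card_p0 a b (by omega), card_p1 a b h, card_p2 a b h]
  · rw [Finset.disjoint_filter]; intro v _ hv; omega
  · rw [Finset.disjoint_left]; intro v hv hv2
    simp only [Finset.mem_union, Finset.mem_filter] at hv hv2; omega

lemma edgeCount_eq {V : Type*} [Fintype V] (G : SimpleGraph V) [Fintype G.edgeSet] :
    edgeCount G = G.edgeFinset.card := by
  rw [edgeCount, SimpleGraph.edgeFinset, Set.ncard_eq_toFinset_card']

lemma two_mul_edgeCount_fromRel {n : ℕ} (r : Fin n → Fin n → Prop) [DecidableRel r] :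
    2 * edgeCount (SimpleGraph.fromRel r)
      + (Finset.univ.filter fun v : Fin n => r v v).card
      = ∑ v : Fin n, ∑ w : Fin n, if r v w ∨ r w v then 1 else 0 := by
  classical
  rw [edgeCount_eq, ← SimpleGraph.sum_degrees_eq_twice_card_edges, Finset.card_filter,
    ← Finset.sum_add_distrib]
  refine Finset.sum_congr rfl fun v _ => ?_
  rw [SimpleGraph.degree, SimpleGraph.neighborFinset_eq_filter, Finset.card_filter]
  have e1 : (∑ w : Fin n, if (SimpleGraph.fromRel r).Adj v w then 1 else 0)
      = ∑ w ∈ Finset.univ.erase v, (if r v w ∨ r w v then 1 else 0) := by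
    rw [← Finset.sum_erase (univ) (f := fun w => if (SimpleGraph.fromRel r).Adj v w then 1 else 0)
      (a := v) (by simp)]
    refine Finset.sum_congr rfl fun w hw => ?_
    have hw' : w ≠ v := (Finset.mem_erase.1 hw).1
    simp [SimpleGraph.fromRel_adj, hw'.symm]
  rw [e1, show (if r v v then (1:ℕ) else 0) = (if r v v ∨ r v v then 1 else 0) by simp,
    Finset.sum_erase_add]
  exact Finset.mem_univ v

lemma double_sum {n : ℕ} (a b : ℕ) (hab : a + b ≤ n) (F : ℕ → ℕ → ℕ) :
    ∑ v : Fin n, ∑ w : Fin n, F (part a b v) (part a b w)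
      = a * (a * F 0 0 + b * F 0 1 + (n-a-b) * F 0 2)
      + b * (a * F 1 0 + b * F 1 1 + (n-a-b) * F 1 2)
      + (n-a-b) * (a * F 2 0 + b * F 2 1 + (n-a-b) * F 2 2) := by
  calc ∑ v : Fin n, ∑ w : Fin n, F (part a b v) (part a b w)
      = ∑ v : Fin n, (fun i => a * F i 0 + b * F i 1 + (n-a-b) * F i 2) (part a b v) := by
        exact Finset.sum_congr rfl fun v _ => sum_part a b hab (F (part a b v))
    _ = _ := sum_part a b hab (fun i => a * F i 0 + b * F i 1 + (n-a-b) * F i 2)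


lemma count_H2 {n : ℕ} (a b : ℕ) (hab : a + b ≤ n) :
    2 * edgeCount (Htemplate n a b 1) + a = a * a := by
  have h : Htemplate n a b 1 = SimpleGraph.fromRel
      (fun u v : Fin n => part a b u = 0 ∧ part a b v = 0) := rfl
  rw [h]
  have key := two_mul_edgeCount_fromRel (fun u v : Fin n => part a b u = 0 ∧ part a b v = 0)
  have diag : (Finset.univ.filter fun v : Fin n =>
      part a b v = 0 ∧ part a b v = 0).card = a := by
    rw [Finset.filter_congr (q := fun v : Fin n => part a b v = 0) fun v _ => by tauto]
    exact card_p0 a b (by omega)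
  rw [diag] at key
  rw [key]
  have body : ∀ v w : Fin n,
      (if (part a b v = 0 ∧ part a b w = 0) ∨ (part a b w = 0 ∧ part a b v = 0) then 1 else 0)
      = (fun i j : ℕ => if (i = 0 ∧ j = 0) ∨ (j = 0 ∧ i = 0) then 1 else 0)
          (part a b v) (part a b w) := by
    intro v w; exact if_congr Iff.rfl rfl rfl
  rw [Finset.sum_congr rfl fun v _ => Finset.sum_congr rfl fun w _ => body v w]
  rw [double_sum a b hab (fun i j : ℕ => if (i = 0 ∧ j = 0) ∨ (j = 0 ∧ i = 0) then 1 else 0)]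
  norm_num

lemma count_H1 {n : ℕ} (a b : ℕ) (hab : a + b ≤ n) :
    2 * edgeCount (Htemplate n a b 0) + n
      = a * a + (n - a) * (n - a) + 2 * (a * (n - a - b)) := by
  have h : Htemplate n a b 0 = SimpleGraph.fromRel (fun u v : Fin n =>
      (part a b u = 0 ∧ part a b v = 0) ∨ (part a b u ≠ 0 ∧ part a b v ≠ 0) ∨
        (part a b u = 0 ∧ part a b v = 2)) := rfl
  rw [h]
  have key := two_mul_edgeCount_fromRel (fun u v : Fin n =>
      (part a b u = 0 ∧ part a b v = 0) ∨ (part a b u ≠ 0 ∧ part a b v ≠ 0) ∨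
        (part a b u = 0 ∧ part a b v = 2))
  have diag : (Finset.univ.filter fun v : Fin n =>
      (part a b v = 0 ∧ part a b v = 0) ∨ (part a b v ≠ 0 ∧ part a b v ≠ 0) ∨
        (part a b v = 0 ∧ part a b v = 2)).card = n := by
    rw [Finset.filter_congr (q := fun _ : Fin n => True) fun v _ => by tauto]
    simp
  rw [diag] at key
  rw [key]
  have body : ∀ v w : Fin n,
      (if ((part a b v = 0 ∧ part a b w = 0) ∨ (part a b v ≠ 0 ∧ part a b w ≠ 0) ∨
            (part a b v = 0 ∧ part a b w = 2)) ∨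
          ((part a b w = 0 ∧ part a b v = 0) ∨ (part a b w ≠ 0 ∧ part a b v ≠ 0) ∨
            (part a b w = 0 ∧ part a b v = 2)) then 1 else 0)
      = (fun i j : ℕ => if ((i = 0 ∧ j = 0) ∨ (i ≠ 0 ∧ j ≠ 0) ∨ (i = 0 ∧ j = 2)) ∨
          ((j = 0 ∧ i = 0) ∨ (j ≠ 0 ∧ i ≠ 0) ∨ (j = 0 ∧ i = 2)) then 1 else 0)
          (part a b v) (part a b w) := by
    intro v w; exact if_congr Iff.rfl rfl rfl
  rw [Finset.sum_congr rfl fun v _ => Finset.sum_congr rfl fun w _ => body v w]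
  rw [double_sum a b hab (fun i j : ℕ => if ((i = 0 ∧ j = 0) ∨ (i ≠ 0 ∧ j ≠ 0) ∨ (i = 0 ∧ j = 2)) ∨
          ((j = 0 ∧ i = 0) ∨ (j ≠ 0 ∧ i ≠ 0) ∨ (j = 0 ∧ i = 2)) then 1 else 0)]
  norm_num
  have h1 : n - a = b + (n - a - b) := by omega
  have h2 : n = a + (b + (n - a - b)) := by omega
  zify
  nlinarith [h1, h2]

lemma count_H3 {n : ℕ} (a b : ℕ) (hab : a + b ≤ n) :
    2 * edgeCount (Htemplate n a b 2) + (n - a)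
      = (n - a) * (n - a) + 2 * (a * b) := by
  have h : Htemplate n a b 2 = SimpleGraph.fromRel (fun u v : Fin n =>
      (part a b u ≠ 0 ∧ part a b v ≠ 0) ∨ (part a b u = 0 ∧ part a b v = 1)) := rfl
  rw [h]
  have key := two_mul_edgeCount_fromRel (fun u v : Fin n =>
      (part a b u ≠ 0 ∧ part a b v ≠ 0) ∨ (part a b u = 0 ∧ part a b v = 1))
  have diag : (Finset.univ.filter fun v : Fin n =>
      (part a b v ≠ 0 ∧ part a b v ≠ 0) ∨ (part a b v = 0 ∧ part a b v = 1)).card = n - a := by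
    rw [Finset.filter_congr (q := fun v : Fin n => ¬ (part a b v = 0)) fun v _ => by
      constructor
      · rintro (⟨h1, -⟩ | ⟨h1, h2⟩) <;> omega
      · intro h1; exact Or.inl ⟨h1, h1⟩]
    rw [Finset.filter_not, Finset.card_sdiff_of_subset (Finset.filter_subset _ _)]
    rw [card_p0 a b (by omega)]
    simp
  rw [diag] at key
  rw [key]
  have body : ∀ v w : Fin n,
      (if ((part a b v ≠ 0 ∧ part a b w ≠ 0) ∨ (part a b v = 0 ∧ part a b w = 1)) ∨
          ((part a b w ≠ 0 ∧ part a b v ≠ 0) ∨ (part a b w = 0 ∧ part a b v = 1)) then 1 else 0)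
      = (fun i j : ℕ => if ((i ≠ 0 ∧ j ≠ 0) ∨ (i = 0 ∧ j = 1)) ∨
          ((j ≠ 0 ∧ i ≠ 0) ∨ (j = 0 ∧ i = 1)) then 1 else 0)
          (part a b v) (part a b w) := by
    intro v w; exact if_congr Iff.rfl rfl rfl
  rw [Finset.sum_congr rfl fun v _ => Finset.sum_congr rfl fun w _ => body v w]
  rw [double_sum a b hab (fun i j : ℕ => if ((i ≠ 0 ∧ j ≠ 0) ∨ (i = 0 ∧ j = 1)) ∨
          ((j ≠ 0 ∧ i ≠ 0) ∨ (j = 0 ∧ i = 1)) then 1 else 0)]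
  norm_num
  have h1 : n - a = b + (n - a - b) := by omega
  zify
  nlinarith [h1]

lemma fin3_cases' (i : Fin 3) : i = 0 ∨ i = 1 ∨ i = 2 := by fin_cases i <;> simp

theorem H_template_is_extremal_in_R2 :
    ∃ C : ℝ, C > 0 ∧ ∀ α₁ α₂ : ℝ, MemR2 α₁ α₂ → α₁ ≥ α₂ → ∀ n : ℕ,
      (∀ i : Fin 3,
        (edgeCount (Htemplate n ⌊Real.sqrt α₂ * (n:ℝ)⌋₊
            ⌊((1 - α₁) / (2 * Real.sqrt α₂)) * (n:ℝ)⌋₊ i) : ℝ) ≥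
          ![α₁, α₂, 2 - α₁ - 2 * Real.sqrt α₂ + α₂] i * (n.choose 2 : ℝ) - C * n) ∧
      ¬ HasRainbowTriangle (Htemplate n ⌊Real.sqrt α₂ * (n:ℝ)⌋₊
          ⌊((1 - α₁) / (2 * Real.sqrt α₂)) * (n:ℝ)⌋₊) := by
  refine ⟨5, by norm_num, ?_⟩
  intro α₁ α₂ hR hge n
  obtain ⟨⟨hα₁0, hα₁1⟩, ⟨hα₂0, hα₂1⟩, hmax⟩ := hR
  set s := Real.sqrt α₂ with hs
  have hs2 : s ^ 2 = α₂ := Real.sq_sqrt hα₂0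
  have hs_nonneg : 0 ≤ s := Real.sqrt_nonneg _
  have hs_le1 : s ≤ 1 := Real.sqrt_le_one.mpr hα₂1
  have hmax1 : 2 - 2 * s ≤ α₁ := le_trans (le_max_left _ _) hmax
  have hmax2 : 1 - 2 * s + 2 * α₂ ≤ α₁ := le_trans (le_max_right _ _) hmax
  have hshalf : 1/2 ≤ s := by linarith
  set t := (1 - α₁) / (2 * s) with ht
  have hspos : 0 < s := by linarith
  have h2st : 2 * s * t = 1 - α₁ := by
    rw [ht]; field_simp
  have ht_nonneg : 0 ≤ t := div_nonneg (by linarith) (by linarith)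
  have hst : s + t ≤ 1 := by
    have h1 : t ≤ 1 - s := by
      rw [ht, div_le_iff₀ (by linarith : (0:ℝ) < 2 * s)]
      linarith only [hmax2, hs2]
    linarith
  set a := ⌊s * (n:ℝ)⌋₊ with ha
  set b := ⌊t * (n:ℝ)⌋₊ with hb
  have hN : (0:ℝ) ≤ n := Nat.cast_nonneg n
  have hA_le : (a:ℝ) ≤ s * n := Nat.floor_le (by positivity)
  have hA_gt : s * n < a + 1 := Nat.lt_floor_add_one _
  have hB_le : (b:ℝ) ≤ t * n := Nat.floor_le (by positivity)
  have hB_gt : t * n < b + 1 := Nat.lt_floor_add_one _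
  have hA_nonneg : (0:ℝ) ≤ a := Nat.cast_nonneg a
  have hB_nonneg : (0:ℝ) ≤ b := Nat.cast_nonneg b
  have hstN : (0:ℝ) ≤ (1 - s - t) * n := mul_nonneg (by linarith) hN
  have hsnn : s * n ≤ n := by nlinarith only [hs_le1, hN, hs_nonneg]
  have htnn : t * n ≤ n := by nlinarith only [hst, hs_nonneg, hN, ht_nonneg]
  have hab : a + b ≤ n := by
    have : ((a + b : ℕ) : ℝ) ≤ (n : ℝ) := by
      push_cast
      linarith only [hA_le, hB_le, hstN]
    exact_mod_cast this
  set c := n - a - b with hc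
  have hcn : n = a + b + c := by omega
  have hcr : (n:ℝ) = a + b + c := by exact_mod_cast congrArg (Nat.cast : ℕ → ℝ) hcn
  have hC_nonneg : (0:ℝ) ≤ c := Nat.cast_nonneg c
  refine ⟨?_, noRT n a b⟩
  have hchoose : ((n.choose 2 : ℕ) : ℝ) = n * (n - 1) / 2 := by rw [Nat.cast_choose_two]
  have key1 : 2 * edgeCount (Htemplate n a b 0) + n
      = a * a + (b + c) * (b + c) + 2 * (a * c) := by
    have k := count_H1 a b hab
    rw [show n - a - b = c from rfl, show n - a = b + c by omega] at k
    exact k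
  have key2 := count_H2 a b hab
  have key3 : 2 * edgeCount (Htemplate n a b 2) + (b + c)
      = (b + c) * (b + c) + 2 * (a * b) := by
    have k := count_H3 a b hab
    rw [show n - a = b + c by omega] at k
    exact k
  have key1R : 2 * (edgeCount (Htemplate n a b 0) : ℝ) + n
      = a * a + ((b:ℝ) + c) * ((b:ℝ) + c) + 2 * (a * c) := by exact_mod_cast key1
  have key2R : 2 * (edgeCount (Htemplate n a b 1) : ℝ) + a = a * a := by exact_mod_cast key2
  have key3R : 2 * (edgeCount (Htemplate n a b 2) : ℝ) + ((b:ℝ) + c)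
      = ((b:ℝ) + c) * ((b:ℝ) + c) + 2 * (a * b) := by exact_mod_cast key3
  clear_value s t a b c
  clear key1 key2 key3 hmax hcn hab hc ha hb hs ht
  intro i
  rcases fin3_cases' i with hi | hi | hi <;> subst hi
  · -- colour 1 : H₁, bound α₁
    simp only [Matrix.cons_val_zero]
    rw [hchoose]
    have expand : 2 * (edgeCount (Htemplate n a b 0) : ℝ)
        = (n:ℝ)^2 - 2 * a * b - n := by linear_combination key1R - ((n:ℝ) + a + b + c) * hcr
    have p1 : (0:ℝ) ≤ (a:ℝ) * (t * n - b) := mul_nonneg hA_nonneg (by linarith)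
    have p2 : (0:ℝ) ≤ (t * n) * (s * n - a) :=
      mul_nonneg (mul_nonneg ht_nonneg hN) (by linarith)
    have f1 : (a:ℝ) * b ≤ s * t * n^2 := by nlinarith only [p1, p2]
    have f2 : α₁ * (n:ℝ)^2 = (n:ℝ)^2 - 2 * s * t * (n:ℝ)^2 := by
      linear_combination ((n:ℝ)^2) * h2st
    have f3 : (0:ℝ) ≤ α₁ * n := mul_nonneg hα₁0 hN
    linarith only [expand, f1, f2, f3, hN]
  · -- colour 2 : H₂, bound α₂
    simp only [Matrix.cons_val_one, Matrix.head_cons, Matrix.cons_val_zero]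
    rw [hchoose]
    have k1 : s * n - a ≤ 1 := by linarith
    have k2 : (s * n - a) * (s * n + a) ≤ 1 * (s * n + a) :=
      mul_le_mul_of_nonneg_right k1 (by positivity)
    have f1 : s^2 * (n:ℝ)^2 - a * a ≤ 2 * n := by nlinarith only [k2, hA_le, hsnn]
    have f2 : α₂ * (n:ℝ)^2 = s^2 * (n:ℝ)^2 := by rw [hs2]
    have f3 : (0:ℝ) ≤ α₂ * n := mul_nonneg hα₂0 hN
    have e1 : (a:ℝ) ≤ n := by linarith
    linarith only [key2R, f1, f2, f3, e1, hN]
  · -- colour 3 : H₃, bound α₃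
    simp only [Matrix.cons_val_two, Matrix.tail_cons, Matrix.head_cons]
    rw [hchoose]
    have k1 : s * n - a ≤ 1 := by linarith
    have k2 : t * n - b ≤ 1 := by linarith
    have g1 : t * n * (s * n - a) ≤ t * n * 1 :=
      mul_le_mul_of_nonneg_left k1 (by positivity)
    have g2 : (a:ℝ) * (t * n - b) ≤ (a:ℝ) * 1 :=
      mul_le_mul_of_nonneg_left k2 hA_nonneg
    have f1 : s * t * (n:ℝ)^2 - a * b ≤ t * n + a := by nlinarith only [g1, g2]
    have hD : (1 - s) * n ≤ (b:ℝ) + c := by linarith only [hcr, hA_le]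
    have hDsq : ((1 - s) * n)^2 ≤ ((b:ℝ) + c)^2 :=
      pow_le_pow_left₀ (mul_nonneg (by linarith) hN) hD 2
    have fα : (2 - α₁ - 2 * s + α₂) * (n:ℝ)^2
        = (1 - s)^2 * (n:ℝ)^2 + 2 * s * t * (n:ℝ)^2 := by
      linear_combination (-(n:ℝ)^2) * h2st - (n:ℝ)^2 * hs2
    have hα₃0 : (0:ℝ) ≤ 2 - α₁ - 2 * s + α₂ := by
      nlinarith only [sq_nonneg (1 - s), mul_nonneg hs_nonneg ht_nonneg, hs2, h2st]
    have hα₃n : (0:ℝ) ≤ (2 - α₁ - 2 * s + α₂) * n := mul_nonneg hα₃0 hN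
    have hDle : (b:ℝ) + c ≤ n := by linarith
    linarith only [key3R, f1, hDsq, fα, hα₃n, hDle, hA_le, hsnn, htnn, hN]
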